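/- Let I be a nonzero ideal of R = Z[x_1,…,x_l] and σ a term ordering on R. Then the set of prime numbers that are not σ-lucky for I is finite. -/

import Mathlib

/-!
For an exponent `d`, the coefficients at `d` of the elements of `I` of degree at most `d`
form an ideal of `ℤ`, generated by some `N(d) ∈ ℕ`, and `d ≤ e` (componentwise) implies
`N(e) ∣ N(d)`. Divisibility on `ℤ` has infinite antichains, so instead take the minimal elements
of the graph `{(d, N(d)) | N(d) ≠ 0}` in the product order of `ℕ^l × ℕ`: by Dickson's lemma
they are finitely many, and since `N` only moves to divisors as `d` grows, comparing `N`-values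
by size is as good as comparing them by divisibility. Elements of `I` with leading terms
`N(d) x^d` for these minimal `(d, N(d))` form a minimal strong Gröbner basis, and a prime that
is not lucky divides one of its finitely many nonzero leading coefficients.
-/

namespace HApaper

/-- A term ordering on the monomials of `ℤ[x_1,…,x_l]`: a linear order on the
exponent vectors which has `1` as least monomial and is compatible with
multiplication of monomials. -/
structure TermOrder (l : ℕ) where
  lin : LinearOrder (Fin l →₀ ℕ)
  zero_le : ∀ m, lin.le 0 m
  add_le_add_right : ∀ a b c, lin.le a b → lin.le (a + c) (b + c)

/-- The leading monomial `LM_σ(f)` of a polynomial (junk value `0` for `f = 0`). -/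
noncomputable def TermOrder.lm {l : ℕ} (σ : TermOrder l) (f : MvPolynomial (Fin l) ℤ) :
    Fin l →₀ ℕ :=
  letI := σ.lin
  f.support.max.unbotD 0

/-- The leading coefficient `LC_σ(f)`. -/
noncomputable def TermOrder.lc {l : ℕ} (σ : TermOrder l) (f : MvPolynomial (Fin l) ℤ) : ℤ :=
  MvPolynomial.coeff (σ.lm f) f

/-- The leading term `LT_σ(f) = LC_σ(f)·x^{LM_σ(f)}`, as an element of `ℤ[x_1,…,x_l]`. -/
noncomputable def TermOrder.lt {l : ℕ} (σ : TermOrder l) (f : MvPolynomial (Fin l) ℤ) :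
    MvPolynomial (Fin l) ℤ :=
  MvPolynomial.monomial (σ.lm f) (σ.lc f)

/-- `G` is a minimal strong `σ`-Gröbner basis of `I` if: its elements are nonzero,
it generates `I`, the leading term of every nonzero element of `I` is divisible by the
leading term of some element of `G`, and no leading term of an element of `G` divides
the leading term of another element of `G`. -/
def IsMinimalStrongGroebnerBasis {l : ℕ} (σ : TermOrder l)
    (I : Ideal (MvPolynomial (Fin l) ℤ)) (G : Finset (MvPolynomial (Fin l) ℤ)) : Prop :=
  (∀ g ∈ G, g ≠ 0) ∧
  Ideal.span (G : Set (MvPolynomial (Fin l) ℤ)) = I ∧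
  (∀ f ∈ I, f ≠ 0 → ∃ g ∈ G, σ.lt g ∣ σ.lt f) ∧
  (∀ g ∈ G, ∀ g' ∈ G, g ≠ g' → ¬ σ.lt g ∣ σ.lt g')

/-- A prime `p` is `σ`-lucky for `I` if it divides no leading coefficient of a
minimal strong `σ`-Gröbner basis of `I`. -/
def IsLuckyPrime {l : ℕ} (σ : TermOrder l) (I : Ideal (MvPolynomial (Fin l) ℤ))
    (p : ℕ) : Prop :=
  ∃ G : Finset (MvPolynomial (Fin l) ℤ), IsMinimalStrongGroebnerBasis σ I G ∧
    ∀ g ∈ G, ¬ ((p : ℤ) ∣ σ.lc g)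

end HApaper

lemma Int.mem_ideal_iff_absNorm_dvd {J : Ideal ℤ} {c : ℤ} :
    c ∈ J ↔ (Ideal.absNorm J : ℤ) ∣ c := by
  conv_lhs => rw [← Int.ideal_span_absNorm_eq_self J]
  exact Ideal.mem_span_singleton

namespace MonomialOrder

open MvPolynomial

variable {ι R : Type*} {m : MonomialOrder ι}

section CommRing

variable [CommRing R]

lemma degree_sub_lt_of_leadingTerm_eq {f g : MvPolynomial ι R}
    (h : m.leadingTerm f = m.leadingTerm g) (hfg : f ≠ g) :
    m.degree (f - g) ≺[m] m.degree f := by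
  obtain ⟨hlc, hdeg⟩ := leadingTerm_eq_leadingTerm_iff.mp h
  refine lt_of_le_of_ne (by simpa [hdeg] using m.degree_sub_le (f := f) (g := g)) fun hd => ?_
  apply m.coeff_degree_ne_zero_iff.mpr (sub_ne_zero.mpr hfg)
  rw [m.toSyn.injective hd, coeff_sub]
  nth_rw 2 [hdeg]
  exact sub_eq_zero.mpr hlc

variable (m) in
/-- Zero together with the leading coefficients of the elements of `I` of degree `d`. -/
noncomputable def leadingCoeffIdeal (I : Ideal (MvPolynomial ι R)) (d : ι →₀ ℕ) : Ideal R :=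
  (I.restrictScalars R ⊓ restrictSupport R {c | c ≼[m] d}).map (lcoeff R d)

variable {I : Ideal (MvPolynomial ι R)} {d e : ι →₀ ℕ} {c : R}

lemma mem_leadingCoeffIdeal :
    c ∈ m.leadingCoeffIdeal I d ↔ ∃ f ∈ I, m.degree f ≼[m] d ∧ f.coeff d = c := by
  simp only [leadingCoeffIdeal, Submodule.mem_map, Submodule.mem_inf,
    Submodule.restrictScalars_mem, mem_restrictSupport_iff, degree_le_iff, lcoeff_apply]
  simp [Set.subset_def, and_assoc]

lemma leadingCoeff_mem_leadingCoeffIdeal {f : MvPolynomial ι R} (hf : f ∈ I) :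
    m.leadingCoeff f ∈ m.leadingCoeffIdeal I (m.degree f) :=
  mem_leadingCoeffIdeal.mpr ⟨f, hf, le_rfl, rfl⟩

lemma exists_leadingTerm_eq_of_mem_leadingCoeffIdeal (hc : c ∈ m.leadingCoeffIdeal I d)
    (hc0 : c ≠ 0) : ∃ f ∈ I, m.leadingTerm f = monomial d c := by
  obtain ⟨f, hfI, hfd, rfl⟩ := mem_leadingCoeffIdeal.mp hc
  have hdeg : m.degree f = d :=
    m.toSyn.injective (le_antisymm hfd (m.le_degree (mem_support_iff.mpr hc0)))
  exact ⟨f, hfI, by rw [leadingTerm, leadingCoeff, hdeg]⟩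

lemma leadingCoeffIdeal_mono (h : d ≤ e) :
    m.leadingCoeffIdeal I d ≤ m.leadingCoeffIdeal I e := by
  intro c hc
  obtain ⟨f, hfI, hfd, rfl⟩ := mem_leadingCoeffIdeal.mp hc
  refine mem_leadingCoeffIdeal.mpr ⟨monomial (e - d) 1 * f, I.mul_mem_left _ hfI, ?_, ?_⟩
  · calc m.toSyn (m.degree (monomial (e - d) 1 * f))
        ≤ m.toSyn (m.degree (monomial (e - d) (1 : R))) + m.toSyn (m.degree f) := by
          rw [← map_add]; exact degree_mul_le
      _ ≤ m.toSyn (e - d) + m.toSyn d := add_le_add (degree_monomial_le 1) hfd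
      _ = m.toSyn e := by rw [← map_add, tsub_add_cancel_of_le h]
  · nth_rw 1 [← tsub_add_cancel_of_le h]
    rw [coeff_monomial_mul, one_mul]

end CommRing

section NoZeroDivisors

variable [CommRing R] [NoZeroDivisors R]

lemma exists_leadingTerm_mul_eq_of_dvd {f g : MvPolynomial ι R}
    (h : m.leadingTerm g ∣ m.leadingTerm f) : ∃ q, m.leadingTerm (q * g) = m.leadingTerm f := by
  obtain ⟨r, hr⟩ := h
  refine ⟨m.leadingTerm r, ?_⟩
  -- `leadingTerm` is idempotent and multiplicative
  rw [leadingTerm_mul, leadingTerm_leadingTerm, ← leadingTerm_leadingTerm g, ← leadingTerm_mul,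
    mul_comm, ← hr, leadingTerm_leadingTerm]

theorem span_eq_of_forall_leadingTerm_dvd {I : Ideal (MvPolynomial ι R)}
    {G : Set (MvPolynomial ι R)} (hGI : G ⊆ I)
    (hG : ∀ f ∈ I, f ≠ 0 → ∃ g ∈ G, m.leadingTerm g ∣ m.leadingTerm f) :
    Ideal.span G = I := by
  refine le_antisymm (Ideal.span_le.mpr hGI) fun f hf => ?_
  induction hd : m.toSyn (m.degree f) using WellFoundedLT.induction generalizing f with
  | ind d ih =>
    subst hd
    rcases eq_or_ne f 0 with rfl | hf0
    · exact Ideal.zero_mem _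
    obtain ⟨g, hgG, hdvd⟩ := hG f hf hf0
    obtain ⟨q, hq⟩ := exists_leadingTerm_mul_eq_of_dvd hdvd
    have hqg : q * g ∈ Ideal.span G := Ideal.mul_mem_left _ q (Ideal.subset_span hgG)
    rcases eq_or_ne f (q * g) with rfl | hne
    · exact hqg
    have hlt := degree_sub_lt_of_leadingTerm_eq hq.symm hne
    rw [← sub_add_cancel f (q * g)]
    exact Ideal.add_mem _ (ih _ hlt _ (I.sub_mem hf (Ideal.span_le.mpr hGI hqg)) rfl) hqg

end NoZeroDivisors

section Int

variable {I : Ideal (MvPolynomial ι ℤ)}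

variable (m) in
def leadingNormGraph (I : Ideal (MvPolynomial ι ℤ)) : Set ((ι →₀ ℕ) × ℕ) :=
  {p | p.2 ≠ 0 ∧ Ideal.absNorm (m.leadingCoeffIdeal I p.1) = p.2}

lemma dvd_of_mem_leadingNormGraph {p q : (ι →₀ ℕ) × ℕ} (hp : p ∈ m.leadingNormGraph I)
    (hq : q ∈ m.leadingNormGraph I) (h : p.1 ≤ q.1) : q.2 ∣ p.2 := by
  rw [← hp.2, ← hq.2]
  exact Ideal.absNorm_dvd_absNorm_of_le (leadingCoeffIdeal_mono h)

lemma exists_leadingTerm_eq_of_mem_leadingNormGraph {p : (ι →₀ ℕ) × ℕ}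
    (hp : p ∈ m.leadingNormGraph I) : ∃ f ∈ I, m.leadingTerm f = monomial p.1 (p.2 : ℤ) :=
  exists_leadingTerm_eq_of_mem_leadingCoeffIdeal
    (Int.mem_ideal_iff_absNorm_dvd.mpr (by rw [hp.2])) (Nat.cast_ne_zero.mpr hp.1)

lemma exists_minimal_monomial_dvd_leadingTerm {f : MvPolynomial ι ℤ} (hf : f ∈ I) (hf0 : f ≠ 0) :
    ∃ b, Minimal (· ∈ m.leadingNormGraph I) b ∧ monomial b.1 (b.2 : ℤ) ∣ m.leadingTerm f := by
  set J := m.leadingCoeffIdeal I (m.degree f)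
  have hJ : m.leadingCoeff f ∈ J := leadingCoeff_mem_leadingCoeffIdeal hf
  have ha : (m.degree f, Ideal.absNorm J) ∈ m.leadingNormGraph I := by
    refine ⟨fun h0 => m.leadingCoeff_ne_zero_iff.mpr hf0 ?_, rfl⟩
    rwa [Ideal.absNorm_eq_zero_iff.mp h0, Submodule.mem_bot] at hJ
  obtain ⟨b, ⟨hb1, hb2⟩, hb⟩ := exists_minimal_le_of_wellFoundedLT _ _ ha
  have hnorm : b.2 = Ideal.absNorm J :=
    le_antisymm hb2 (Nat.le_of_dvd (Nat.pos_of_ne_zero hb.prop.1)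
      (dvd_of_mem_leadingNormGraph hb.prop ha hb1))
  refine ⟨b, hb, monomial_dvd_monomial.mpr ⟨Or.inr hb1, ?_⟩⟩
  rw [hnorm]
  exact Int.mem_ideal_iff_absNorm_dvd.mp hJ

lemma eq_of_minimal_of_monomial_dvd {b b' : (ι →₀ ℕ) × ℕ}
    (hb : Minimal (· ∈ m.leadingNormGraph I) b) (hb' : Minimal (· ∈ m.leadingNormGraph I) b')
    (h : monomial b.1 (b.2 : ℤ) ∣ monomial b'.1 (b'.2 : ℤ)) : b = b' := by
  obtain ⟨hle | hle, hdvd⟩ := monomial_dvd_monomial.mp h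
  · exact absurd (Nat.cast_eq_zero.mp hle) hb'.prop.1
  have hnorm : b.2 = b'.2 := Nat.dvd_antisymm (Int.natCast_dvd_natCast.mp hdvd)
    (dvd_of_mem_leadingNormGraph hb.prop hb'.prop hle)
  exact (hb'.eq_of_ge hb.prop (Prod.mk_le_mk.mpr ⟨hle, hnorm.le⟩)).symm

variable (m I) in
theorem exists_minimal_strong_groebner_basis [Finite ι] :
    ∃ G : Finset (MvPolynomial ι ℤ), (∀ g ∈ G, g ≠ 0) ∧
      Ideal.span (G : Set (MvPolynomial ι ℤ)) = I ∧
      (∀ f ∈ I, f ≠ 0 → ∃ g ∈ G, m.leadingTerm g ∣ m.leadingTerm f) ∧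
      (∀ g ∈ G, ∀ g' ∈ G, g ≠ g' → ¬ m.leadingTerm g ∣ m.leadingTerm g') := by
  classical
  set B := {b | Minimal (· ∈ m.leadingNormGraph I) b}
  have : Fintype B :=
    (WellQuasiOrderedLE.finite_of_isAntichain (setOfPred_minimal_antichain _)).fintype
  choose F hFI hF using fun b : B => exists_leadingTerm_eq_of_mem_leadingNormGraph b.2.prop
  have hF0 (b : B) : F b ≠ 0 := by
    rw [Ne, ← m.leadingTerm_eq_zero_iff, hF, monomial_eq_zero, Nat.cast_eq_zero]
    exact b.2.prop.1
  have hcover (f) (hf : f ∈ I) (hf0 : f ≠ 0) :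
      ∃ g ∈ Finset.univ.image F, m.leadingTerm g ∣ m.leadingTerm f := by
    obtain ⟨b, hb, hdvd⟩ := exists_minimal_monomial_dvd_leadingTerm (m := m) hf hf0
    exact ⟨F ⟨b, hb⟩, Finset.mem_image_of_mem _ (Finset.mem_univ _), by rwa [hF]⟩
  refine ⟨Finset.univ.image F, Finset.forall_mem_image.mpr fun b _ => hF0 b,
    span_eq_of_forall_leadingTerm_dvd (by simpa [Set.range_subset_iff] using hFI) hcover,
    hcover, ?_⟩
  simp only [Finset.forall_mem_image, Finset.mem_univ, forall_const]
  intro b b' hne hdvd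
  rw [hF, hF] at hdvd
  exact hne (congrArg F (Subtype.ext (eq_of_minimal_of_monomial_dvd b.2 b'.2 hdvd)))

end Int

end MonomialOrder

namespace HApaper

open MvPolynomial MonomialOrder

namespace TermOrder

variable {l : ℕ} (σ : TermOrder l)

def Syn (_ : TermOrder l) : Type := Fin l →₀ ℕ

noncomputable instance : AddCommMonoid σ.Syn := inferInstanceAs (AddCommMonoid (Fin l →₀ ℕ))

instance : LinearOrder σ.Syn := σ.lin

instance : IsOrderedAddMonoid σ.Syn where
  add_le_add_left a b h c := σ.add_le_add_right a b c h

lemma lin_le_of_le {a b : Fin l →₀ ℕ} (h : a ≤ b) : σ.lin.le a b := by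
  simpa [tsub_add_cancel_of_le h] using σ.add_le_add_right 0 (b - a) a (σ.zero_le _)

instance : WellQuasiOrderedLE σ.Syn where
  wqo := (wellQuasiOrdered_le (α := Fin l →₀ ℕ)).of_surjective
    ⟨id, fun h => σ.lin_le_of_le h⟩ Function.surjective_id

noncomputable def toMonomialOrder : MonomialOrder (Fin l) where
  syn := σ.Syn
  toSyn := AddEquiv.refl _
  toSyn_monotone _ _ := σ.lin_le_of_le

lemma lm_eq_degree (f : MvPolynomial (Fin l) ℤ) : σ.lm f = σ.toMonomialOrder.degree f := by
  rcases eq_or_ne f 0 with rfl | hf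
  · simp [lm]
  -- `σ.lm` takes the maximum for `σ.lin`, not for the pointwise order of `Fin l →₀ ℕ`
  show (Finset.max (α := σ.Syn) f.support).unbotD 0 = _
  suffices Finset.max (α := σ.Syn) f.support =
      WithBot.some (α := σ.Syn) (σ.toMonomialOrder.degree f) by
    rw [this]; rfl
  exact le_antisymm
    (Finset.max_le fun a ha => WithBot.coe_le_coe.mpr (le_degree (m := σ.toMonomialOrder) ha))
    (Finset.le_max (α := σ.Syn) (degree_mem_support hf))

lemma lc_eq_leadingCoeff (f : MvPolynomial (Fin l) ℤ) :
    σ.lc f = σ.toMonomialOrder.leadingCoeff f := by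
  rw [lc, lm_eq_degree, MonomialOrder.leadingCoeff]

lemma lt_eq_leadingTerm : σ.lt = σ.toMonomialOrder.leadingTerm := by
  ext1 f
  rw [TermOrder.lt, lc_eq_leadingCoeff, lm_eq_degree, MonomialOrder.leadingTerm]

lemma lc_ne_zero {f : MvPolynomial (Fin l) ℤ} (hf : f ≠ 0) : σ.lc f ≠ 0 := by
  rw [lc_eq_leadingCoeff]
  exact leadingCoeff_ne_zero_iff.mpr hf

end TermOrder

variable {l : ℕ} {σ : TermOrder l} {I : Ideal (MvPolynomial (Fin l) ℤ)}

variable (σ I) in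
theorem exists_isMinimalStrongGroebnerBasis : ∃ G, IsMinimalStrongGroebnerBasis σ I G := by
  simpa only [IsMinimalStrongGroebnerBasis, TermOrder.lt_eq_leadingTerm] using
    σ.toMonomialOrder.exists_minimal_strong_groebner_basis I

lemma IsMinimalStrongGroebnerBasis.dvd_prod_lc_of_not_isLuckyPrime
    {G : Finset (MvPolynomial (Fin l) ℤ)} (hG : IsMinimalStrongGroebnerBasis σ I G) {p : ℕ}
    (hp : ¬ IsLuckyPrime σ I p) : (p : ℤ) ∣ ∏ g ∈ G, σ.lc g := by
  simp only [IsLuckyPrime, not_exists, not_and, not_forall, not_not] at hp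
  obtain ⟨g, hg, hpg⟩ := hp G hG
  exact hpg.trans (Finset.dvd_prod_of_mem _ hg)

theorem finitely_many_not_lucky_primes_general {l : ℕ} (σ : TermOrder l)
    (I : Ideal (MvPolynomial (Fin l) ℤ)) :
    {p : ℕ | p.Prime ∧ ¬ IsLuckyPrime σ I p}.Finite := by
  obtain ⟨G, hG⟩ := exists_isMinimalStrongGroebnerBasis σ I
  have hprod : (∏ g ∈ G, σ.lc g).natAbs ≠ 0 :=
    Int.natAbs_ne_zero.mpr (Finset.prod_ne_zero_iff.mpr fun g hg => σ.lc_ne_zero (hG.1 g hg))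
  refine (∏ g ∈ G, σ.lc g).natAbs.primeFactors.finite_toSet.subset fun p ⟨hp, hpl⟩ => ?_
  exact Nat.mem_primeFactors.mpr
    ⟨hp, Int.natCast_dvd.mp (hG.dvd_prod_lc_of_not_isLuckyPrime hpl), hprod⟩

/-- For a nonzero ideal `I` of `ℤ[x_1,…,x_l]`, only finitely many primes fail to be
`σ`-lucky for `I`. -/
theorem finitely_many_not_lucky_primes {l : ℕ} (σ : TermOrder l)
    (I : Ideal (MvPolynomial (Fin l) ℤ)) (hI : I ≠ ⊥) :
    {p : ℕ | p.Prime ∧ ¬ IsLuckyPrime σ I p}.Finite :=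
  finitely_many_not_lucky_primes_general σ I

end HApaper
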